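/- arXiv:1808.02842 — 2 statements merged into one kernel-verified Lean document; each statement's English description precedes it below -/
import Mathlib

section
/- For all Ste > 0 and Bi > 0, the polynomial p₂(z) = z⁴ + (2/Bi)z³ + (6 + Ste)z² + (3/Bi)z − 3·Ste has exactly one positive root, and this root lies in the open interval (ξ_min, ξ_max), where ξ_min = (√(4·Ste² + 8·Ste + 1/Bi²) − 1/Bi)/(2(2+Ste)) and ξ_max = (√(12·Ste² + 36·Ste + 9/Bi²) − 3/Bi)/(2(3+Ste)). -/
/-!
On `z > 0` the quartic `p₂` is strictly increasing, so it has at most one positive root. The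
endpoints are the positive roots of the quadratics `(2 + Ste) z² + z / Bi = Ste` and
`(3 + Ste) z² + 3 z / Bi = 3 Ste`; substituting these relations into `p₂` gives
`p₂ ξ_min = -(3 + 2 Ste) ξ_min⁴ < 0` and `p₂ ξ_max = ξ_max⁴ + (2 / Bi) ξ_max³ + 3 ξ_max² > 0`,
and the intermediate value theorem places the root strictly between them.
-/

open Set

lemma quadratic_pos_root {a b c D x : ℝ} (ha : 0 < a) (hc : 0 < c) (hD : D = b ^ 2 + 4 * a * c)
    (hx : x = (√D - b) / (2 * a)) : 0 < x ∧ a * x ^ 2 + b * x = c := by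
  have hb_lt : b < √D :=
    calc b ≤ |b| := le_abs_self b
      _ = √(b ^ 2) := (Real.sqrt_sq_eq_abs b).symm
      _ < √D := Real.sqrt_lt_sqrt (sq_nonneg b) (by rw [hD]; nlinarith)
  have hsq : √D ^ 2 = D := Real.sq_sqrt (by rw [hD]; positivity)
  have hx_lin : 2 * a * x = √D - b := by rw [hx]; field_simp
  refine ⟨hx ▸ div_pos (by linarith) (by linarith), ?_⟩
  have key : 4 * a * (a * x ^ 2 + b * x) = 4 * a * c := by
    linear_combination (2 * a * x + √D + b) * hx_lin + hsq + hD
  exact mul_left_cancel₀ (by positivity) key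

lemma strictMonoOn_quartic {a b c d : ℝ} (ha : 0 ≤ a) (hb : 0 ≤ b) (hc : 0 ≤ c) :
    StrictMonoOn (fun z : ℝ => z ^ 4 + a * z ^ 3 + b * z ^ 2 + c * z - d) (Ici 0) := by
  intro x hx y _ hxy
  have h4 := pow_lt_pow_left₀ hxy hx (by norm_num : 4 ≠ 0)
  have h3 := pow_le_pow_left₀ hx hxy.le 3
  have h2 := pow_le_pow_left₀ hx hxy.le 2
  linarith [mul_le_mul_of_nonneg_left h3 ha, mul_le_mul_of_nonneg_left h2 hb,
    mul_le_mul_of_nonneg_left hxy.le hc]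

lemma existsUnique_pos_root_mem_Ioo {f : ℝ → ℝ} {a b : ℝ} (hf : StrictMonoOn f (Ici 0))
    (hcont : ContinuousOn f (Icc a b)) (ha : 0 < a) (hb : 0 < b) (hfa : f a < 0) (hfb : 0 < f b) :
    (∃! z, 0 < z ∧ f z = 0) ∧ ∀ z, 0 < z → f z = 0 → z ∈ Ioo a b := by
  have hroot_mem : ∀ z, 0 < z → f z = 0 → z ∈ Ioo a b := fun z hz hfz =>
    ⟨(hf.lt_iff_lt ha.le hz.le).1 (hfz ▸ hfa), (hf.lt_iff_lt hz.le hb.le).1 (hfz ▸ hfb)⟩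
  obtain ⟨z, hz, hfz⟩ :=
    intermediate_value_Ioo ((hf.lt_iff_lt ha.le hb.le).1 (hfa.trans hfb)).le hcont ⟨hfa, hfb⟩
  refine ⟨⟨z, ⟨ha.trans hz.1, hfz⟩, fun y ⟨hy, hfy⟩ => ?_⟩, hroot_mem⟩
  exact hf.injOn (mem_Ici.2 hy.le) (mem_Ici.2 (ha.trans hz.1).le) (hfy.trans hfz.symm)

theorem stmt_4 (Ste Bi : ℝ) (hSte : 0 < Ste) (hBi : 0 < Bi)
    (p₂ : ℝ → ℝ)
    (hp : ∀ z, p₂ z = z^4 + (2/Bi)*z^3 + (6 + Ste)*z^2 + (3/Bi)*z - 3*Ste)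
    (ξmin ξmax : ℝ)
    (hξmin : ξmin = (Real.sqrt (4*Ste^2 + 8*Ste + 1/Bi^2) - 1/Bi) / (2*(2+Ste)))
    (hξmax : ξmax = (Real.sqrt (12*Ste^2 + 36*Ste + 9/Bi^2) - 3/Bi) / (2*(3+Ste))) :
    (∃! z, 0 < z ∧ p₂ z = 0) ∧
    (∀ z, 0 < z → p₂ z = 0 → z ∈ Set.Ioo ξmin ξmax) := by
  obtain ⟨hmin_pos, hmin⟩ := quadratic_pos_root (a := 2 + Ste) (b := 1 / Bi) (c := Ste)
    (by positivity) hSte (by ring) hξmin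
  obtain ⟨hmax_pos, hmax⟩ := quadratic_pos_root (a := 3 + Ste) (b := 3 / Bi) (c := 3 * Ste)
    (by positivity) (by positivity) (by ring) hξmax
  obtain rfl : p₂ = fun z => z^4 + (2/Bi)*z^3 + (6 + Ste)*z^2 + (3/Bi)*z - 3*Ste := funext hp
  refine existsUnique_pos_root_mem_Ioo
    (strictMonoOn_quartic (by positivity) (by positivity) (by positivity)) (by fun_prop)
    hmin_pos hmax_pos ?_ ?_
  · have hval : ξmin ^ 4 + 2 / Bi * ξmin ^ 3 + (6 + Ste) * ξmin ^ 2 + 3 / Bi * ξmin - 3 * Ste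
        = -(3 + 2 * Ste) * ξmin ^ 4 := by
      linear_combination (2 * ξmin ^ 2 + 3) * hmin
    rw [hval]
    nlinarith [pow_pos hmin_pos 4]
  · have hval : ξmax ^ 4 + 2 / Bi * ξmax ^ 3 + (6 + Ste) * ξmax ^ 2 + 3 / Bi * ξmax - 3 * Ste
        = ξmax ^ 4 + 2 / Bi * ξmax ^ 3 + 3 * ξmax ^ 2 := by
      linear_combination hmax
    rw [hval]
    positivity
end

section
/- For every Ste > 0 and Bi > 0, the equation z·exp(z²)·(erf(z) + 1/(Bi·√π)) = Ste/√π has a unique positive solution z. -/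
/-!
The left-hand side `z ↦ z exp(z²) (erf z + c)` with `c = 1/(Bi √π) > 0` is continuous, vanishes
at `0` and is strictly increasing on `[0, ∞)`, being a product of the nonnegative strictly
increasing `z exp(z²)` with the positive increasing `erf z + c`. Since it dominates `c z`, it
exceeds `Ste/√π` at `z = Ste/(c √π)`, and the intermediate value theorem gives a root, which
strict monotonicity makes unique.
-/

noncomputable def erf (z : ℝ) : ℝ :=
  (2 / Real.sqrt Real.pi) * ∫ t in (0:ℝ)..z, Real.exp (-t^2)

open Real Set

lemma StrictMonoOn.mul_monotoneOn {α M₀ : Type*} [Preorder α] [MulZeroClass M₀] [PartialOrder M₀]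
    [PosMulMono M₀] [MulPosStrictMono M₀] {s : Set α} {f g : α → M₀}
    (hf : StrictMonoOn f s) (hg : MonotoneOn g s) (hf₀ : ∀ x ∈ s, 0 ≤ f x)
    (hg₀ : ∀ x ∈ s, 0 < g x) : StrictMonoOn (f * g) s :=
  fun _ hx _ hy h ↦ mul_lt_mul (hf hx hy h) (hg hx hy h.le) (hg₀ _ hx) (hf₀ _ hy)

lemma existsUnique_pos_eq_of_strictMonoOn {f : ℝ → ℝ} {y b : ℝ} (hcont : ContinuousOn f (Ici 0))
    (hmono : StrictMonoOn f (Ici 0)) (hb : 0 ≤ b) (h₀ : f 0 < y) (hyb : y ≤ f b) :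
    ∃! z, 0 < z ∧ f z = y := by
  obtain ⟨z, ⟨hz, -⟩, hfz⟩ :=
    intermediate_value_Ioc hb (hcont.mono Icc_subset_Ici_self) ⟨h₀, hyb⟩
  refine ⟨z, ⟨hz, hfz⟩, fun w ⟨hw, hfw⟩ ↦ ?_⟩
  exact hmono.injOn (mem_Ici.2 hw.le) (mem_Ici.2 hz.le) (hfw.trans hfz.symm)

lemma hasDerivAt_erf (z : ℝ) : HasDerivAt erf (2 / √π * exp (-z ^ 2)) z :=
  ((Continuous.integral_hasStrictDerivAt (by fun_prop) 0 z).hasDerivAt).const_mul _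

@[simp]
lemma erf_zero : erf 0 = 0 := by
  simp [erf]

lemma strictMono_erf : StrictMono erf :=
  strictMono_of_hasDerivAt_pos hasDerivAt_erf fun _ ↦ by positivity

@[fun_prop]
lemma continuous_erf : Continuous erf :=
  continuous_iff_continuousAt.2 fun z ↦ (hasDerivAt_erf z).continuousAt

lemma erf_nonneg {z : ℝ} (hz : 0 ≤ z) : 0 ≤ erf z :=
  erf_zero ▸ strictMono_erf.monotone hz

noncomputable def convectiveStefanFun (c z : ℝ) : ℝ :=
  z * exp (z ^ 2) * (erf z + c)

lemma continuous_convectiveStefanFun (c : ℝ) : Continuous (convectiveStefanFun c) := by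
  unfold convectiveStefanFun
  fun_prop

@[simp]
lemma convectiveStefanFun_zero (c : ℝ) : convectiveStefanFun c 0 = 0 := by
  simp [convectiveStefanFun]

lemma strictMonoOn_convectiveStefanFun {c : ℝ} (hc : 0 < c) :
    StrictMonoOn (convectiveStefanFun c) (Ici 0) := by
  have hexp : MonotoneOn (fun z : ℝ ↦ exp (z ^ 2)) (Ici 0) :=
    exp_monotone.comp_monotoneOn (pow_left_strictMonoOn₀ two_ne_zero).monotoneOn
  have hlin : StrictMonoOn (fun z : ℝ ↦ z * exp (z ^ 2)) (Ici 0) :=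
    strictMono_id.strictMonoOn _ |>.mul_monotoneOn hexp (fun _ hz ↦ hz) fun _ _ ↦ exp_pos _
  exact hlin.mul_monotoneOn (fun _ _ _ _ h ↦ by gcongr; exact strictMono_erf.monotone h)
    (fun z hz ↦ mul_nonneg hz (exp_pos _).le) fun z hz ↦ by linarith [erf_nonneg hz]

lemma mul_le_convectiveStefanFun {c z : ℝ} (hc : 0 ≤ c) (hz : 0 ≤ z) :
    z * c ≤ convectiveStefanFun c z :=
  calc z * c = z * 1 * c := by ring
    _ ≤ z * exp (z ^ 2) * (erf z + c) := by
      gcongr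
      · exact one_le_exp (sq_nonneg z)
      · linarith [erf_nonneg hz]

theorem stmt_10 (Ste Bi : ℝ) (hSte : 0 < Ste) (hBi : 0 < Bi) :
    ∃! z : ℝ, 0 < z ∧
      z * Real.exp (z^2) * (erf z + 1 / (Bi * Real.sqrt Real.pi)) = Ste / Real.sqrt Real.pi := by
  set c := 1 / (Bi * √π)
  set y := Ste / √π
  have hc : 0 < c := by positivity
  have hy : 0 < y := by positivity
  refine existsUnique_pos_eq_of_strictMonoOn (f := convectiveStefanFun c) (b := y / c)
    (continuous_convectiveStefanFun c).continuousOn (strictMonoOn_convectiveStefanFun hc)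
    (by positivity) (by simpa using hy) ?_
  calc y = y / c * c := (div_mul_cancel₀ y hc.ne').symm
    _ ≤ convectiveStefanFun c (y / c) := mul_le_convectiveStefanFun hc.le (by positivity)
end
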